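/- Let g : (0,∞) → [0,∞) be measurable with ∫₀¹ g(x) dx < ∞, and suppose that g(x) = x^{-γ}·L₁(x) for all x > 1, where γ ∈ (1/2, 1) and L₁ : (0,∞) → ℝ is slowly varying at infinity and bounded away from 0 and ∞ on every interval of the form [1, T]. Then the autocovariance function has the long memory property: ∫₀^∞ (∫₀^∞ g(x)·g(x+h) dx) dh = ∞, i.e. the function h ↦ ∫₀^∞ g(x)·g(x+h) dx is not integrable on (0,∞). -/

import Mathlib

/-!
Writing `f u = log L₁ (exp u)` turns slow variation into `f (u + s) - f u → 0` for every `s`.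
For measurable `f` this convergence is uniform in `s ∈ [0, 1]` (a translation-invariance argument
on the sets where the increments are large), so `f` grows sublinearly; this gives Potter's bounds
`x ^ (-ε) ≲ L₁ x ≲ x ^ ε`. Hence `g x ≲ x ^ (ε - γ)` with `2 (γ - ε) > 1`, which makes
`x ↦ g x * g (x + h)` integrable, while `g y ≳ y ^ (-(γ + ε))` with `γ + ε ≤ 1` bounds the
autocovariance below by a non-integrable multiple of `h ^ (-(γ + ε))`.
-/

open MeasureTheory Set Filter Topology

section UniformConvergence

variable {f : ℝ → ℝ}

lemma tendsto_volume_setOf_lt_abs_sub (hf : Measurable f)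
    (hf_add : ∀ s, Tendsto (fun u => f (u + s) - f u) atTop (𝓝 0))
    {v : ℕ → ℝ} (hv : Tendsto v atTop atTop)
    {δ : ℝ} (hδ : 0 < δ) (T : ℝ) :
    Tendsto (fun n => volume {t ∈ Icc 0 T | δ < |f (v n + t) - f (v n)|}) atTop (𝓝 0) := by
  have h_lim : ∀ t, ∀ᶠ n in atTop,
      t ∈ {t ∈ Icc 0 T | δ < |f (v n + t) - f (v n)|} ↔ t ∈ (∅ : Set ℝ) := by
    intro t
    have hsmall := (hf_add t).comp hv |>.eventually (eventually_abs_sub_lt 0 hδ)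
    filter_upwards [hsmall] with n hn
    simp only [Function.comp_apply, sub_zero] at hn
    simp only [mem_empty_iff_false, iff_false, not_and, not_lt]
    exact fun _ => hn.le
  have hmeas : ∀ n, MeasurableSet {t ∈ Icc 0 T | δ < |f (v n + t) - f (v n)|} := fun n =>
    measurableSet_Icc.inter (measurableSet_lt measurable_const
      ((hf.comp (measurable_const.add measurable_id)).sub measurable_const).abs)
  rw [← measure_empty (μ := (volume : Measure ℝ))]
  exact tendsto_measure_of_tendsto_indicator atTop hmeas measurableSet_Icc
    (by simp [Real.volume_Icc]) (Eventually.of_forall fun n => sep_subset _ _) h_lim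

lemma one_le_volume_add_volume_of_lt_abs_sub {u s ε : ℝ} (hs : s ∈ Icc (0:ℝ) 1)
    (hbig : ε < |f (u + s) - f u|) :
    1 ≤ volume {t ∈ Icc 0 2 | ε / 2 < |f (u + t) - f u|}
      + volume {t ∈ Icc 0 2 | ε / 2 < |f (u + s + t) - f (u + s)|} := by
  have hcover : Icc (1:ℝ) 2 ⊆ {t ∈ Icc 0 2 | ε / 2 < |f (u + t) - f u|} ∪
      (· + -s) ⁻¹' {t ∈ Icc 0 2 | ε / 2 < |f (u + s + t) - f (u + s)|} := by
    intro t ⟨ht1, ht2⟩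
    by_contra hnot
    simp only [mem_union, mem_ofPred_eq, mem_preimage, mem_Icc, not_or, not_and, not_lt] at hnot
    have h1 := hnot.1 ⟨by linarith, ht2⟩
    have h2 := hnot.2 ⟨by linarith [hs.2], by linarith [hs.1]⟩
    rw [show u + s + (t + -s) = u + t by ring] at h2
    have := abs_sub_le (f (u + s)) (f (u + t)) (f u)
    rw [abs_sub_comm (f (u + s)) (f (u + t))] at this
    linarith
  calc (1 : ENNReal) = volume (Icc (1:ℝ) 2) := by simp [Real.volume_Icc]; norm_num
    _ ≤ _ := (measure_mono hcover).trans (measure_union_le _ _)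
    _ = _ := by rw [measure_preimage_add_right]

-- The uniform convergence theorem of regular variation, in additive form.
theorem eventually_forall_Icc_abs_sub_le (hf : Measurable f)
    (hf_add : ∀ s, Tendsto (fun u => f (u + s) - f u) atTop (𝓝 0)) {ε : ℝ} (hε : 0 < ε) :
    ∀ᶠ u in atTop, ∀ s ∈ Icc (0:ℝ) 1, |f (u + s) - f u| ≤ ε := by
  by_contra hcon
  simp only [not_eventually, not_forall, not_le, exists_prop] at hcon
  choose u hu s hs hbig using fun n : ℕ => frequently_atTop.1 hcon n
  have hu_top : Tendsto u atTop atTop := tendsto_atTop_mono hu tendsto_natCast_atTop_atTop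
  have hus_top : Tendsto (fun n => u n + s n) atTop atTop :=
    tendsto_atTop_mono (fun n => le_add_of_nonneg_right (hs n).1) hu_top
  have hsmall := ((tendsto_volume_setOf_lt_abs_sub hf hf_add hu_top (half_pos hε) 2).add
    (tendsto_volume_setOf_lt_abs_sub hf hf_add hus_top (half_pos hε) 2)).eventually
    (gt_mem_nhds (show (0 : ENNReal) + 0 < 1 by simp))
  obtain ⟨n, hn⟩ := hsmall.exists
  exact (one_le_volume_add_volume_of_lt_abs_sub (hs n) (hbig n)).not_gt hn

lemma abs_sub_le_of_forall_Icc_abs_sub_le {U ε : ℝ}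
    (hU : ∀ u ≥ U, ∀ s ∈ Icc (0:ℝ) 1, |f (u + s) - f u| ≤ ε) {u : ℝ} (hu : U ≤ u) :
    |f u - f U| ≤ ε * (u - U + 1) := by
  have hsteps : ∀ n : ℕ, ∀ s ∈ Icc (0:ℝ) 1, |f (U + n + s) - f U| ≤ ε * (n + 1) := by
    intro n
    induction n with
    | zero => simpa using hU U le_rfl
    | succ n ih =>
      intro s hs
      have hstep := hU (U + n + s) (by linarith [hs.1, n.cast_nonneg (α := ℝ)]) 1
        ⟨zero_le_one, le_rfl⟩
      have htri := abs_sub_le (f (U + n + s + 1)) (f (U + n + s)) (f U)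
      push_cast
      rw [show U + (n + 1) + s = U + n + s + 1 by ring]
      linarith [ih s hs]
  set n := ⌊u - U⌋₊
  have hn : (n : ℝ) ≤ u - U := Nat.floor_le (by linarith)
  have hn' : u - U < n + 1 := Nat.lt_floor_add_one _
  have hε : 0 ≤ ε := (abs_nonneg _).trans (hU U le_rfl 0 ⟨le_rfl, zero_le_one⟩)
  calc |f u - f U| = |f (U + n + (u - U - n)) - f U| := by ring_nf
    _ ≤ ε * (n + 1) := hsteps n _ ⟨by linarith, by linarith⟩
    _ ≤ ε * (u - U + 1) := by gcongr

theorem exists_eventually_abs_le_mul_add (hf : Measurable f)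
    (hf_add : ∀ s, Tendsto (fun u => f (u + s) - f u) atTop (𝓝 0)) {ε : ℝ} (hε : 0 < ε) :
    ∃ C, ∀ᶠ u in atTop, |f u| ≤ ε * u + C := by
  obtain ⟨U, hU⟩ := eventually_atTop.1 (eventually_forall_Icc_abs_sub_le hf hf_add hε)
  refine ⟨|f U| - ε * U + ε, eventually_atTop.2 ⟨U, fun u hu => ?_⟩⟩
  have := abs_sub_le_of_forall_Icc_abs_sub_le hU hu
  have := abs_sub_abs_le_abs_sub (f u) (f U)
  linarith

end UniformConvergence

lemma exists_le_mul_rpow_of_eventually_le {L : ℝ → ℝ} {C p : ℝ} (hp : 0 ≤ p)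
    (hev : ∀ᶠ x in atTop, L x ≤ C * x ^ p)
    (hbdd : ∀ T ≥ (1:ℝ), ∃ B, ∀ x ∈ Icc 1 T, L x ≤ B) :
    ∃ D, 0 ≤ D ∧ ∀ x ≥ 1, L x ≤ D * x ^ p := by
  obtain ⟨X, hX⟩ := eventually_atTop.1 hev
  obtain ⟨B, hB⟩ := hbdd (max X 1) (le_max_right _ _)
  refine ⟨max (max C B) 0, le_max_right _ _, fun x hx => ?_⟩
  have hxp : 1 ≤ x ^ p := Real.one_le_rpow hx hp
  rcases le_or_gt X x with hXx | hxX
  · exact (hX x hXx).trans (by gcongr; exact (le_max_left _ _).trans (le_max_left _ _))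
  · calc L x ≤ B := hB x ⟨hx, hxX.le.trans (le_max_left _ _)⟩
      _ ≤ max (max C B) 0 := (le_max_right _ _).trans (le_max_left _ _)
      _ ≤ max (max C B) 0 * x ^ p := le_mul_of_one_le_right (le_max_right _ _) hxp

def SlowlyVarying (L : ℝ → ℝ) : Prop :=
  ∀ t > (0:ℝ), Tendsto (fun x => L (t * x) / L x) atTop (𝓝 1)

namespace SlowlyVarying

variable {L L' : ℝ → ℝ}

lemma congr' (hL : SlowlyVarying L) (h : L =ᶠ[atTop] L') : SlowlyVarying L' := by
  intro t ht
  refine (hL t ht).congr' ?_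
  filter_upwards [(tendsto_id.const_mul_atTop ht).eventually h, h] with x htx hx
  simp only [id] at htx
  rw [htx, hx]

lemma tendsto_log_comp_exp_add_sub (hL : SlowlyVarying L) (hpos : ∀ᶠ x in atTop, 0 < L x)
    (s : ℝ) :
    Tendsto (fun u => Real.log (L (Real.exp (u + s))) - Real.log (L (Real.exp u))) atTop
      (𝓝 0) := by
  have hpos_exp := Real.tendsto_exp_atTop.eventually hpos
  have hratio := ((Real.continuousAt_log one_ne_zero).tendsto.comp
    ((hL (Real.exp s) (Real.exp_pos s)).comp Real.tendsto_exp_atTop))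
  rw [Real.log_one] at hratio
  refine hratio.congr' ?_
  filter_upwards [hpos_exp, (tendsto_atTop_add_const_right _ s tendsto_id).eventually hpos_exp]
    with u hu hus
  simp only [Function.comp_apply, id] at hus ⊢
  rw [← Real.exp_add, add_comm s u, Real.log_div hus.ne' hu.ne']

/-- Potter's bounds. -/
theorem exists_eventually_rpow_bounds (hL : SlowlyVarying L) (hmeas : Measurable L)
    (hpos : ∀ᶠ x in atTop, 0 < L x) {ε : ℝ} (hε : 0 < ε) :
    ∃ c C : ℝ, 0 < c ∧ ∀ᶠ x in atTop, c * x ^ (-ε) ≤ L x ∧ L x ≤ C * x ^ ε := by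
  obtain ⟨C, hC⟩ := exists_eventually_abs_le_mul_add
    (hmeas.comp Real.measurable_exp).log (hL.tendsto_log_comp_exp_add_sub hpos) hε
  refine ⟨Real.exp (-C), Real.exp C, Real.exp_pos _, ?_⟩
  filter_upwards [Real.tendsto_log_atTop.eventually hC, hpos, eventually_gt_atTop 0]
    with x hx hLx hx0
  simp only [Function.comp_apply, Real.exp_log hx0] at hx
  obtain ⟨hlo, hhi⟩ := abs_le.1 hx
  rw [Real.rpow_def_of_pos hx0, Real.rpow_def_of_pos hx0, ← Real.exp_add, ← Real.exp_add]
  constructor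
  · calc Real.exp (-C + Real.log x * -ε) ≤ Real.exp (Real.log (L x)) :=
          Real.exp_le_exp.2 (by linarith)
      _ = L x := Real.exp_log hLx
  · calc L x = Real.exp (Real.log (L x)) := (Real.exp_log hLx).symm
      _ ≤ Real.exp (C + Real.log x * ε) := Real.exp_le_exp.2 (by linarith)

theorem exists_rpow_bounds (hL : SlowlyVarying L) (hmeas : Measurable L')
    (hL' : L' =ᶠ[atTop] L)
    (hbdd : ∀ T ≥ (1:ℝ), ∃ c C : ℝ, 0 < c ∧ ∀ x ∈ Icc 1 T, c ≤ L x ∧ L x ≤ C)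
    {ε : ℝ} (hε : 0 < ε) :
    ∃ c D X : ℝ, 0 < c ∧ 0 ≤ D ∧ 1 < X ∧
      (∀ x ≥ 1, L x ≤ D * x ^ ε) ∧ ∀ x ≥ X, c * x ^ (-ε) ≤ L x := by
  have hpos : ∀ᶠ x in atTop, 0 < L x := by
    filter_upwards [eventually_ge_atTop 1] with x hx
    obtain ⟨c, _, hc, hcL⟩ := hbdd x hx
    exact hc.trans_le (hcL x ⟨hx, le_rfl⟩).1
  obtain ⟨c, C, hc, hPotter'⟩ := (hL.congr' hL'.symm).exists_eventually_rpow_bounds hmeas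
    (hL'.symm.rw (fun _ y => 0 < y) hpos) hε
  have hPotter : ∀ᶠ x in atTop, c * x ^ (-ε) ≤ L x ∧ L x ≤ C * x ^ ε := by
    filter_upwards [hPotter', hL'] with x hx hLx
    rwa [← hLx]
  obtain ⟨D, hD, hD_le⟩ := exists_le_mul_rpow_of_eventually_le hε.le
    (hPotter.mono fun _ h => h.2)
    (fun T hT => let ⟨_, B, _, hB⟩ := hbdd T hT; ⟨B, fun x hx => (hB x hx).2⟩)
  obtain ⟨X, hX⟩ := eventually_atTop.1 (hPotter.and (eventually_gt_atTop 1))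
  exact ⟨c, D, X, hc, hD, (hX X le_rfl).2, hD_le, fun x hx => (hX x hx).1.1⟩

end SlowlyVarying

lemma rpow_neg_mul_rpow_mul {x : ℝ} (hx : 0 < x) (γ δ c : ℝ) :
    x ^ (-γ) * (c * x ^ δ) = c * x ^ (-(γ - δ)) := by
  rw [mul_left_comm, ← Real.rpow_add hx]; ring_nf

lemma not_integrableOn_Ioi_of_rpow_le {F : ℝ → ℝ} {K β X : ℝ} (hK : 0 < K) (hβ : β ≤ 1)
    (hX : 0 < X) (hF : ∀ h > X, K * h ^ (-β) ≤ F h) : ¬ IntegrableOn F (Ioi X) := by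
  intro hint
  have hpow : IntegrableOn (fun h => K * h ^ (-β)) (Ioi X) := by
    refine hint.mono' ((continuousOn_id.rpow_const fun h (hh : X < h) =>
      Or.inl (hX.trans hh).ne').aestronglyMeasurable measurableSet_Ioi |>.const_mul K) ?_
    filter_upwards [ae_restrict_mem measurableSet_Ioi] with h (hh : X < h)
    rw [Real.norm_of_nonneg (by have : 0 < h := hX.trans hh; positivity)]
    exact hF h hh
  have := (integrable_const_mul_iff (isUnit_iff_ne_zero.2 hK.ne') _).1 hpow
  linarith [(integrableOn_Ioi_rpow_iff hX).1 this]

lemma le_setIntegral_Ioi_of_le_on_Ioc {F : ℝ → ℝ} {c : ℝ}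
    (hF_nonneg : ∀ x ∈ Ioi (0:ℝ), 0 ≤ F x) (hF_int : IntegrableOn F (Ioi 0))
    (hc : ∀ x ∈ Ioc (1:ℝ) 2, c ≤ F x) : c ≤ ∫ x in Ioi 0, F x := by
  have hsub : Ioc (1:ℝ) 2 ⊆ Ioi 0 := fun x hx => lt_trans zero_lt_one hx.1
  calc c = c * volume.real (Ioc (1:ℝ) 2) := by norm_num [Real.volume_real_Ioc_of_le]
    _ ≤ ∫ x in Ioc 1 2, F x :=
        setIntegral_ge_of_const_le_real measurableSet_Ioc (by simp) hc (hF_int.mono_set hsub)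
    _ ≤ ∫ x in Ioi 0, F x :=
        setIntegral_mono_set hF_int (ae_restrict_of_forall_mem measurableSet_Ioi hF_nonneg)
          hsub.eventuallyLE

section Autocovariance

variable {g : ℝ → ℝ}

lemma integrableOn_mul_comp_add_const (hg_meas : Measurable g)
    (hg_nonneg : ∀ x ∈ Ioi (0:ℝ), 0 ≤ g x) (hg_int01 : IntegrableOn g (Ioc 0 1))
    {D a : ℝ} (ha : 1 / 2 < a) (hD : 0 ≤ D) (hub : ∀ y > 1, g y ≤ D * y ^ (-a))
    {h : ℝ} (hh : 1 ≤ h) :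
    IntegrableOn (fun x => g x * g (x + h)) (Ioi 0) := by
  have hmeas : AEStronglyMeasurable (fun x => g x * g (x + h)) volume :=
    (hg_meas.mul (hg_meas.comp (measurable_add_const h))).aestronglyMeasurable
  have hnorm : ∀ x > 0, ‖g x * g (x + h)‖ = g x * g (x + h) := fun x hx =>
    Real.norm_of_nonneg (mul_nonneg (hg_nonneg x hx) (hg_nonneg _ (by simp; linarith)))
  have hshift : ∀ x > 0, g (x + h) ≤ D * x ^ (-a) ∧ g (x + h) ≤ D := by
    intro x hx
    have hxh := hub (x + h) (by linarith)
    refine ⟨hxh.trans ?_, hxh.trans ?_⟩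
    · exact mul_le_mul_of_nonneg_left
        (Real.rpow_le_rpow_of_nonpos hx (by linarith) (by linarith)) hD
    · exact mul_le_of_le_one_right hD
        (Real.rpow_le_one_of_one_le_of_nonpos (by linarith) (by linarith))
  have hnear : IntegrableOn (fun x => g x * g (x + h)) (Ioc 0 1) := by
    refine (hg_int01.mul_const D).mono' hmeas.restrict ?_
    filter_upwards [ae_restrict_mem measurableSet_Ioc] with x hx
    rw [hnorm x hx.1]
    exact mul_le_mul_of_nonneg_left (hshift x hx.1).2 (hg_nonneg x hx.1)
  have hfar : IntegrableOn (fun x => g x * g (x + h)) (Ioi 1) := by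
    refine ((integrableOn_Ioi_rpow_of_lt (by linarith : -2 * a < -1) one_pos).const_mul
      (D * D)).mono' hmeas.restrict ?_
    filter_upwards [ae_restrict_mem measurableSet_Ioi] with x (hx : 1 < x)
    rw [hnorm x (by linarith)]
    calc g x * g (x + h) ≤ (D * x ^ (-a)) * (D * x ^ (-a)) :=
          mul_le_mul (hub x hx) (hshift x (by linarith)).1 (hg_nonneg _ (by simp; linarith))
            (by positivity)
      _ = D * D * x ^ (-2 * a) := by
          rw [show -2 * a = -a + -a by ring, Real.rpow_add (by linarith)]; ring
  simpa [Ioc_union_Ioi_eq_Ioi zero_le_one] using hnear.union hfar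

theorem not_integrableOn_autocovariance_of_rpow_bounds (hg_meas : Measurable g)
    (hg_nonneg : ∀ x ∈ Ioi (0:ℝ), 0 ≤ g x) (hg_int01 : IntegrableOn g (Ioc 0 1))
    {D a : ℝ} (ha : 1 / 2 < a) (hD : 0 ≤ D) (hub : ∀ y > 1, g y ≤ D * y ^ (-a))
    {d β X : ℝ} (hd : 0 < d) (hβ₀ : 0 ≤ β) (hβ₁ : β ≤ 1) (hX : 1 ≤ X)
    (hlb : ∀ y ≥ X, d * y ^ (-β) ≤ g y) {m : ℝ} (hm : 0 < m)
    (hm_le : ∀ x ∈ Ioc (1:ℝ) 2, m ≤ g x) :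
    ¬ IntegrableOn (fun h => ∫ x in Ioi 0, g x * g (x + h)) (Ioi 0) := by
  have hlower : ∀ h > X, m * d * 3 ^ (-β) * h ^ (-β) ≤ ∫ x in Ioi 0, g x * g (x + h) := by
    intro h hh
    refine le_setIntegral_Ioi_of_le_on_Ioc
      (fun x hx => mul_nonneg (hg_nonneg x hx) (hg_nonneg _ (by simp; linarith [mem_Ioi.1 hx])))
      (integrableOn_mul_comp_add_const hg_meas hg_nonneg hg_int01 ha hD hub (by linarith))
      fun x hx => ?_
    obtain ⟨hx1, hx2⟩ := hx
    have hh0 : 0 < h := by linarith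
    have hpow : 3 ^ (-β) * h ^ (-β) ≤ (x + h) ^ (-β) := by
      rw [← Real.mul_rpow (by norm_num) (by linarith)]
      exact Real.rpow_le_rpow_of_nonpos (by linarith) (by linarith) (by linarith)
    calc m * d * 3 ^ (-β) * h ^ (-β) = m * (d * (3 ^ (-β) * h ^ (-β))) := by ring
      _ ≤ g x * g (x + h) := mul_le_mul (hm_le x ⟨hx1, hx2⟩)
          ((mul_le_mul_of_nonneg_left hpow hd.le).trans (hlb _ (by linarith)))
          (by positivity) (hm.le.trans (hm_le x ⟨hx1, hx2⟩))
  exact fun hint => not_integrableOn_Ioi_of_rpow_le (by positivity) hβ₁ (by linarith) hlower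
    (hint.mono_set (Ioi_subset_Ioi (by linarith)))

end Autocovariance

/-- Long memory property: if `g(x) = x^(-γ) L₁(x)` for `x > 1` with `γ ∈ (1/2,1)` and `L₁`
slowly varying at infinity, then the autocovariance function
`h ↦ ∫₀^∞ g(x) g(x+h) dx` is not integrable on `(0,∞)`. -/
theorem bss_long_memory_property
    (γ : ℝ) (hγ : γ ∈ Ioo (1/2 : ℝ) 1)
    (g L₁ : ℝ → ℝ)
    (hg_meas : Measurable g)
    (hg_nonneg : ∀ x ∈ Ioi (0:ℝ), 0 ≤ g x)
    (hg_int01 : IntegrableOn g (Ioc 0 1))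
    (hform : ∀ x > (1:ℝ), g x = x ^ (-γ) * L₁ x)
    (hL₁_slow : ∀ t > (0:ℝ), Tendsto (fun x => L₁ (t * x) / L₁ x) atTop (nhds 1))
    (hL₁_bdd : ∀ T ≥ (1:ℝ), ∃ c Cu : ℝ, 0 < c ∧ ∀ x ∈ Icc (1:ℝ) T, c ≤ L₁ x ∧ L₁ x ≤ Cu) :
    ¬ IntegrableOn (fun h => ∫ x in Ioi (0:ℝ), g x * g (x + h)) (Ioi 0) := by
  obtain ⟨hγ_gt, hγ_lt⟩ := hγ
  obtain ⟨ε, hε, hε_lt⟩ := exists_between (lt_min (sub_pos.2 hγ_gt) (sub_pos.2 hγ_lt))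
  obtain ⟨hε₁, hε₂⟩ := lt_min_iff.1 hε_lt
  -- `L₁` need not be measurable, but it agrees on `(1, ∞)` with `x ↦ x ^ γ * g x`.
  have hL_eq : (fun x => x ^ γ * g x) =ᶠ[atTop] L₁ := by
    filter_upwards [eventually_gt_atTop 1] with x hx
    rw [hform x hx, ← mul_assoc, ← Real.rpow_add (by linarith), add_neg_cancel,
      Real.rpow_zero, one_mul]
  obtain ⟨c, D, X, hc, hD, hX, hD_le, hc_le⟩ := SlowlyVarying.exists_rpow_bounds
    hL₁_slow ((measurable_id.pow_const γ).mul hg_meas) hL_eq hL₁_bdd hε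
  obtain ⟨c₁, _, hc₁, hc₁L⟩ := hL₁_bdd 2 one_le_two
  refine not_integrableOn_autocovariance_of_rpow_bounds (D := D) (d := c) (β := γ + ε)
    (m := c₁ * 2 ^ (-γ)) hg_meas hg_nonneg hg_int01 (by linarith : 1 / 2 < γ - ε) hD ?_ hc
    (by linarith) (by linarith) hX.le ?_ (by positivity) ?_
  · intro y hy
    rw [hform y hy, ← rpow_neg_mul_rpow_mul (by linarith)]
    exact mul_le_mul_of_nonneg_left (hD_le y hy.le) (by positivity)
  · intro y hy
    rw [hform y (by linarith), ← sub_neg_eq_add, ← rpow_neg_mul_rpow_mul (by linarith)]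
    exact mul_le_mul_of_nonneg_left (hc_le y hy) (Real.rpow_nonneg (by linarith) _)
  · intro x ⟨hx1, hx2⟩
    rw [hform x hx1, mul_comm c₁]
    exact mul_le_mul (Real.rpow_le_rpow_of_nonpos (by linarith) hx2 (by linarith))
      (hc₁L x ⟨hx1.le, hx2⟩).1 hc₁.le (by positivity)
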